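/- Let X₁, …, Xₘ be i.i.d. nonnegative NBU random variables with common mean E[X] ∈ (0, ∞) and with E[min_{l=1..m} X_l] > 0. Then 1 / E[min_{l=1..m} X_l] ≤ m / E[X]. -/

import Mathlib

/-!
With `F̄ t = P[X > t]`, the layer-cake formula and the substitution `s = m t` give
`E[X] = ∫₀^∞ F̄ = m ∫₀^∞ F̄(m t) dt`. Iterating the NBU inequality gives `F̄(m t) ≤ F̄(t)^m`, and by
independence `F̄(t)^m = P[min_l X_l > t]`, whose integral is `E[min_l X_l]`. Working with lower
Lebesgue integrals until the last step avoids all integrability side conditions.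
-/

open MeasureTheory ProbabilityTheory Set
open scoped ENNReal

theorem le_pow_of_submultiplicative {M : Type*} [CommMonoid M] [Preorder M] [MulLeftMono M]
    {F : ℝ → M} (hF : ∀ τ t, 0 ≤ τ → 0 ≤ t → F (τ + t) ≤ F τ * F t) {t : ℝ} (ht : 0 ≤ t)
    {n : ℕ} (hn : n ≠ 0) : F (n * t) ≤ F t ^ n := by
  induction n, Nat.one_le_iff_ne_zero.mpr hn using Nat.le_induction with
  | base => simp
  | succ n hn ih =>
    calc F ((n + 1 : ℕ) * t) = F (n * t + t) := by push_cast; ring_nf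
      _ ≤ F (n * t) * F t := hF _ _ (by positivity) ht
      _ ≤ F t ^ n * F t := mul_le_mul_left (ih (by omega)) _
      _ = F t ^ (n + 1) := (pow_succ _ _).symm

theorem setLIntegral_Ioi_zero_eq_mul_comp_mul {c : ℝ} (hc : 0 < c) (g : ℝ → ℝ≥0∞) :
    ∫⁻ t in Ioi 0, g t = ENNReal.ofReal c * ∫⁻ t in Ioi 0, g (c * t) := by
  conv_lhs => rw [← image_const_mul_Ioi_zero hc]
  rw [lintegral_image_eq_lintegral_abs_deriv_mul measurableSet_Ioi
    (fun x _ => (hasDerivAt_const_mul c).hasDerivWithinAt) (mul_right_injective₀ hc.ne').injOn,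
    abs_of_pos hc, lintegral_const_mul' _ _ ENNReal.ofReal_ne_top]

section

variable {Ω : Type*} [MeasurableSpace Ω] {μ : Measure Ω}

theorem lintegral_ofReal_le_mul_setLIntegral_measure_lt_pow {Y : Ω → ℝ} (hY : 0 ≤ᵐ[μ] Y)
    (hYm : AEMeasurable Y μ)
    (hNBU : ∀ τ t : ℝ, 0 ≤ τ → 0 ≤ t →
      μ {ω | τ + t < Y ω} ≤ μ {ω | τ < Y ω} * μ {ω | t < Y ω})
    {n : ℕ} (hn : n ≠ 0) :
    ∫⁻ ω, ENNReal.ofReal (Y ω) ∂μ ≤ n * ∫⁻ t in Ioi 0, μ {ω | t < Y ω} ^ n := by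
  have hn' : (0 : ℝ) < n := by exact_mod_cast Nat.pos_of_ne_zero hn
  rw [lintegral_eq_lintegral_meas_lt μ hY hYm, setLIntegral_Ioi_zero_eq_mul_comp_mul hn',
    ENNReal.ofReal_natCast]
  gcongr 1
  exact setLIntegral_mono' measurableSet_Ioi fun t ht =>
    le_pow_of_submultiplicative (F := fun t => μ {ω | t < Y ω}) hNBU (le_of_lt ht) hn

theorem measure_lt_inf'_eq_pow {ι : Type*} [Fintype ι] (hne : (Finset.univ : Finset ι).Nonempty)
    {X : ι → Ω → ℝ} (hXm : ∀ i, AEMeasurable (X i) μ) (hindep : iIndepFun X μ) {i₀ : ι}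
    (hident : ∀ i, μ.map (X i) = μ.map (X i₀)) (t : ℝ) :
    μ {ω | t < Finset.univ.inf' hne (fun i => X i ω)} = μ {ω | t < X i₀ ω} ^ Fintype.card ι := by
  have hsurv : ∀ i, μ (X i ⁻¹' Ioi t) = μ {ω | t < X i₀ ω} := fun i => by
    rw [← Measure.map_apply_of_aemeasurable (hXm i) measurableSet_Ioi, hident i,
      Measure.map_apply_of_aemeasurable (hXm i₀) measurableSet_Ioi]
    rfl
  have hinter : {ω | t < Finset.univ.inf' hne (fun i => X i ω)} = ⋂ i, X i ⁻¹' Ioi t := by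
    ext ω
    simp [Finset.lt_inf'_iff]
  rw [hinter, hindep.meas_iInter fun i => ⟨Ioi t, measurableSet_Ioi, rfl⟩]
  simp [hsurv]

theorem integral_le_card_mul_integral_inf' {ι : Type*} [Fintype ι]
    (hne : (Finset.univ : Finset ι).Nonempty) {X : ι → Ω → ℝ} (hXm : ∀ i, AEMeasurable (X i) μ)
    (hX : ∀ i, 0 ≤ᵐ[μ] X i) (hindep : iIndepFun X μ) {i₀ : ι}
    (hident : ∀ i, μ.map (X i) = μ.map (X i₀))
    (hNBU : ∀ τ t : ℝ, 0 ≤ τ → 0 ≤ t →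
      μ {ω | τ + t < X i₀ ω} ≤ μ {ω | τ < X i₀ ω} * μ {ω | t < X i₀ ω})
    (hmin : Integrable (fun ω => Finset.univ.inf' hne (fun i => X i ω)) μ) :
    ∫ ω, X i₀ ω ∂μ ≤ Fintype.card ι * ∫ ω, Finset.univ.inf' hne (fun i => X i ω) ∂μ := by
  have : Nonempty ι := Finset.univ_nonempty_iff.mp hne
  have hmin_nonneg : 0 ≤ᵐ[μ] fun ω => Finset.univ.inf' hne (fun i => X i ω) := by
    filter_upwards [ae_all_iff.mpr hX] with ω hω
    exact Finset.le_inf' _ _ fun i _ => hω i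
  have hlintegral : ∫⁻ ω, ENNReal.ofReal (X i₀ ω) ∂μ
      ≤ Fintype.card ι * ∫⁻ ω, ENNReal.ofReal (Finset.univ.inf' hne (fun i => X i ω)) ∂μ := by
    rw [lintegral_eq_lintegral_meas_lt μ hmin_nonneg hmin.aemeasurable]
    simp_rw [measure_lt_inf'_eq_pow hne hXm hindep hident]
    exact lintegral_ofReal_le_mul_setLIntegral_measure_lt_pow (hX i₀) (hXm i₀) hNBU
      Fintype.card_ne_zero
  rw [integral_eq_lintegral_of_nonneg_ae (hX i₀) (hXm i₀).aestronglyMeasurable,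
    integral_eq_lintegral_of_nonneg_ae hmin_nonneg hmin.aestronglyMeasurable,
    ← ENNReal.toReal_natCast, ← ENNReal.toReal_mul]
  exact ENNReal.toReal_mono (ENNReal.mul_ne_top (ENNReal.natCast_ne_top _)
    hmin.lintegral_lt_top.ne) hlintegral

end

theorem one_div_le_div_of_le_mul {a b c : ℝ} (ha : 0 < a) (hc : 0 ≤ c) (h : a ≤ c * b) :
    1 / b ≤ c / a := by
  have hb : 0 < b := pos_of_mul_pos_right (ha.trans_le h) hc
  rwa [div_le_div_iff₀ hb ha, one_mul]

theorem stmt_1_general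
    {Ω : Type*} [MeasurableSpace Ω] (μ : Measure Ω)
    (m : ℕ) (hm : 0 < m) (X : Fin m → Ω → ℝ)
    (hmeas : ∀ l, Measurable (X l))
    (hnonneg : ∀ l, ∀ᵐ ω ∂μ, 0 ≤ X l ω)
    (hindep : iIndepFun X μ)
    (hident : ∀ l, Measure.map (X l) μ = Measure.map (X ⟨0, hm⟩) μ)
    (hNBU : ∀ τ t : ℝ, 0 ≤ τ → 0 ≤ t →
      μ {ω | X ⟨0, hm⟩ ω > τ + t} ≤ μ {ω | X ⟨0, hm⟩ ω > τ} * μ {ω | X ⟨0, hm⟩ ω > t})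
    (hmean_pos : 0 < ∫ ω, X ⟨0, hm⟩ ω ∂μ)
    (hint_min : Integrable (fun ω => Finset.univ.inf' (Finset.univ_nonempty_iff.mpr
      ⟨⟨0, hm⟩⟩) (fun l => X l ω)) μ) :
    1 / (∫ ω, Finset.univ.inf' (Finset.univ_nonempty_iff.mpr
      ⟨⟨0, hm⟩⟩) (fun l => X l ω) ∂μ)
      ≤ (m : ℝ) / (∫ ω, X ⟨0, hm⟩ ω ∂μ) := by
  refine one_div_le_div_of_le_mul hmean_pos m.cast_nonneg ?_
  simpa using integral_le_card_mul_integral_inf' _ (fun l => (hmeas l).aemeasurable) hnonneg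
    hindep hident hNBU hint_min

/-- For i.i.d. nonnegative NBU random variables `X 0, …, X (m-1)` with positive finite mean
and positive mean minimum, `1 / E[min_l X_l] ≤ m / E[X]`. -/
theorem stmt_1
    {Ω : Type*} [MeasurableSpace Ω] (μ : Measure Ω) [IsProbabilityMeasure μ]
    (m : ℕ) (hm : 0 < m) (X : Fin m → Ω → ℝ)
    (hmeas : ∀ l, Measurable (X l))
    (hnonneg : ∀ l, ∀ᵐ ω ∂μ, 0 ≤ X l ω)
    (hindep : iIndepFun X μ)
    (hident : ∀ l, Measure.map (X l) μ = Measure.map (X ⟨0, hm⟩) μ)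
    (hNBU : ∀ τ t : ℝ, 0 ≤ τ → 0 ≤ t →
      μ {ω | X ⟨0, hm⟩ ω > τ + t} ≤ μ {ω | X ⟨0, hm⟩ ω > τ} * μ {ω | X ⟨0, hm⟩ ω > t})
    (hint : Integrable (X ⟨0, hm⟩) μ)
    (hmean_pos : 0 < ∫ ω, X ⟨0, hm⟩ ω ∂μ)
    (hint_min : Integrable (fun ω => Finset.univ.inf' (Finset.univ_nonempty_iff.mpr
      ⟨⟨0, hm⟩⟩) (fun l => X l ω)) μ)
    (hmin_pos : 0 < ∫ ω, Finset.univ.inf' (Finset.univ_nonempty_iff.mpr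
      ⟨⟨0, hm⟩⟩) (fun l => X l ω) ∂μ) :
    1 / (∫ ω, Finset.univ.inf' (Finset.univ_nonempty_iff.mpr
      ⟨⟨0, hm⟩⟩) (fun l => X l ω) ∂μ)
      ≤ (m : ℝ) / (∫ ω, X ⟨0, hm⟩ ω ∂μ) :=
  stmt_1_general μ m hm X hmeas hnonneg hindep hident hNBU hmean_pos hint_min
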